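/- Let $R$ be a normal commutative ring without zero divisors, $a \in R$, and $T = R[1/a]$. Suppose a monic polynomial $f \in R[X]$ factors as $f = g \cdot f_1$ with $g, f_1$ monic in $T[X]$. Then either $a = 0$ in $R$, or both $g$ and $f_1$ have all coefficients in (the image of) $R$, i.e., $g, f_1 \in R[X]$. -/

import Mathlib

open Polynomial

/-- A commutative ring is *normal* if every element integral over a principal
ideal `(a)` belongs to `(a)`. -/
def IsNormalRing (R : Type*) [CommRing R] : Prop :=
  ∀ b a : R,
    (∃ n : ℕ, 0 < n ∧ ∃ u : ℕ → R,
      b ^ n + ∑ i ∈ Finset.range n, u i * a ^ (i + 1) * b ^ (n - 1 - i) = 0) →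
    b ∈ Ideal.span {a}

theorem IsNormalRing.isIntegrallyClosed {R : Type*} [CommRing R] [IsDomain R]
    (hR : IsNormalRing R) : IsIntegrallyClosed R := by
  rw [isIntegrallyClosed_iff (FractionRing R)]
  intro x hx
  obtain ⟨p, pm, pe⟩ := hx
  obtain ⟨⟨b, c⟩, hbc⟩ := IsLocalization.mk'_surjective (nonZeroDivisors R) x
  set φ := algebraMap R (FractionRing R) with hφ
  set n := p.natDegree with hn'
  have hn : 0 < n := by
    rcases Nat.eq_zero_or_pos n with h | h
    · exfalso
      have h1 := Polynomial.eq_one_of_monic_natDegree_zero pm h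
      rw [h1] at pe
      simp at pe
    · exact h
  have hb : φ b = x * φ (c : R) := by
    rw [← hbc, IsLocalization.mk'_spec]
  have hev : x ^ n + ∑ i ∈ Finset.range n, φ (p.coeff i) * x ^ i = 0 := by
    rw [← pe, eval₂_eq_sum_range, Finset.sum_range_succ, pm.coeff_natDegree, map_one,
      one_mul, add_comm]
  have key : φ (b ^ n + ∑ i ∈ Finset.range n, p.coeff i * (c : R) ^ (n - i) * b ^ i) = 0 := by
    rw [map_add, map_pow, map_sum]
    simp_rw [map_mul, map_pow, hb]
    have hterm : ∀ i ∈ Finset.range n,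
        φ (p.coeff i) * φ (c : R) ^ (n - i) * (x * φ (c : R)) ^ i
          = φ (p.coeff i) * x ^ i * φ (c : R) ^ n := by
      intro i hi
      have hin : i ≤ n := (Finset.mem_range.1 hi).le
      calc φ (p.coeff i) * φ (c : R) ^ (n - i) * (x * φ (c : R)) ^ i
          = φ (p.coeff i) * x ^ i * (φ (c : R) ^ (n - i) * φ (c : R) ^ i) := by
            rw [mul_pow]; ring
        _ = φ (p.coeff i) * x ^ i * φ (c : R) ^ n := by
            rw [← pow_add, Nat.sub_add_cancel hin]
    rw [Finset.sum_congr rfl hterm, mul_pow, ← Finset.sum_mul]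
    calc x ^ n * φ (c : R) ^ n + (∑ i ∈ Finset.range n, φ (p.coeff i) * x ^ i) * φ (c : R) ^ n
        = (x ^ n + ∑ i ∈ Finset.range n, φ (p.coeff i) * x ^ i) * φ (c : R) ^ n := by ring
      _ = 0 := by rw [hev, zero_mul]
  have key0 : b ^ n + ∑ i ∈ Finset.range n, p.coeff i * (c : R) ^ (n - i) * b ^ i = 0 := by
    apply IsFractionRing.injective R (FractionRing R)
    rw [map_zero]
    exact key
  have hsum : ∑ j ∈ Finset.range n, p.coeff (n - 1 - j) * (c : R) ^ (j + 1) * b ^ (n - 1 - j)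
      = ∑ i ∈ Finset.range n, p.coeff i * (c : R) ^ (n - i) * b ^ i := by
    rw [← Finset.sum_range_reflect (fun i => p.coeff i * (c : R) ^ (n - i) * b ^ i) n]
    refine Finset.sum_congr rfl fun j hj => ?_
    have hjn : j < n := Finset.mem_range.1 hj
    have : n - (n - 1 - j) = j + 1 := by omega
    simp only [this]
  have hmem : b ∈ Ideal.span {(c : R)} :=
    hR b c ⟨n, hn, fun j => p.coeff (n - 1 - j), by rw [hsum]; exact key0⟩
  rw [Ideal.mem_span_singleton] at hmem
  obtain ⟨r, hr⟩ := hmem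
  refine ⟨r, ?_⟩
  have hc0 : φ (c : R) ≠ 0 := by
    intro h
    have := IsFractionRing.injective R (FractionRing R) (h.trans (map_zero φ).symm)
    exact mem_nonZeroDivisors_iff_ne_zero.mp c.2 this
  have : φ r * φ (c : R) = x * φ (c : R) := by
    rw [← hb, hr, map_mul]; ring
  exact mul_right_cancel₀ hc0 this

theorem monic_factorization_descends {R : Type*} [CommRing R]
    (hR : IsNormalRing R) (hzd : ∀ x y : R, x * y = 0 → x = 0 ∨ y = 0)
    (a : R) (f : R[X]) (hf : f.Monic)
    (g f₁ : Polynomial (Localization.Away a)) (hg : g.Monic) (hf₁ : f₁.Monic)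
    (hfac : f.map (algebraMap R (Localization.Away a)) = g * f₁) :
    a = 0 ∨ ∃ g' f₁' : R[X],
      g'.map (algebraMap R (Localization.Away a)) = g ∧
      f₁'.map (algebraMap R (Localization.Away a)) = f₁ := by
  by_cases ha : a = 0
  · exact Or.inl ha
  right
  haveI : Nontrivial R := nontrivial_of_ne a 0 ha
  haveI : NoZeroDivisors R := ⟨fun {x y} h => hzd x y h⟩
  haveI : IsDomain R := NoZeroDivisors.to_isDomain R
  haveI : IsIntegrallyClosed R := hR.isIntegrallyClosed
  set T := Localization.Away a with hT
  set K := FractionRing R with hK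
  have hle : Submonoid.powers a ≤ nonZeroDivisors R :=
    Submonoid.powers_le.mpr (mem_nonZeroDivisors_of_ne_zero ha)
  letI : Algebra T K :=
    IsLocalization.localizationAlgebraOfSubmonoidLe T K (Submonoid.powers a) (nonZeroDivisors R) hle
  haveI : IsScalarTower R T K :=
    IsLocalization.localization_isScalarTower_of_submonoid_le T K (Submonoid.powers a)
      (nonZeroDivisors R) hle
  haveI : IsFractionRing T K :=
    IsFractionRing.isFractionRing_of_isDomain_of_isLocalization (Submonoid.powers a) T K
  have inj : Function.Injective (algebraMap T K) := IsFractionRing.injective T K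
  have hmapK : f.map (algebraMap R K)
      = g.map (algebraMap T K) * f₁.map (algebraMap T K) := by
    rw [IsScalarTower.algebraMap_eq R T K, ← Polynomial.map_map, hfac, Polynomial.map_mul]
  have descend : ∀ q : T[X], q.Monic → q ∣ f.map (algebraMap R T) →
      ∃ q' : R[X], q'.map (algebraMap R T) = q := by
    intro q hq ⟨w, hw⟩
    have hdvd : q.map (algebraMap T K) ∣ f.map (algebraMap R K) := by
      refine ⟨w.map (algebraMap T K), ?_⟩
      rw [IsScalarTower.algebraMap_eq R T K, ← Polynomial.map_map, hw, Polynomial.map_mul]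
    obtain ⟨q', hq'⟩ := IsIntegrallyClosed.eq_map_mul_C_of_dvd K hf hdvd
    rw [(hq.map (algebraMap T K)).leadingCoeff, Polynomial.C_1, mul_one] at hq'
    refine ⟨q', Polynomial.map_injective (algebraMap T K) inj ?_⟩
    rw [Polynomial.map_map, ← IsScalarTower.algebraMap_eq, hq']
  obtain ⟨g', hg'⟩ := descend g hg ⟨f₁, hfac⟩
  obtain ⟨f₁', hf₁'⟩ := descend f₁ hf₁ ⟨g, by rw [hfac, mul_comm]⟩
  exact ⟨g', f₁', hg', hf₁'⟩
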